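/- Let R be a commutative artinian principal ideal ring, M a finitely generated R-module, N an R-module isomorphic to R, and ⟨,⟩ : M × M → N a non-degenerate symmetric R-bilinear form. Then for all submodules M', M'' ⊆ M one has (M' + M'')^⊥ = M'^⊥ ∩ M''^⊥ and (M' ∩ M'')^⊥ = M'^⊥ + M''^⊥. -/
import Mathlib

section Aux

variable {R : Type*} [CommRing R] [IsArtinianRing R] [IsPrincipalIdealRing R]

/-- Double annihilator lemma in an artinian principal ideal ring: if `x` annihilates
every annihilator of `a`, then `x ∈ (a)`. -/
lemma AuxOrth.annann_mem (a x : R) (hx : ∀ y, y * a = 0 → x * y = 0) :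
    x ∈ Submodule.span R ({a} : Set R) := by
  obtain ⟨b, hb⟩ := (IsPrincipalIdealRing.principal (Ideal.torsionOf R R a)).principal
  have hba : b * a = 0 := by
    have : b ∈ Ideal.torsionOf R R a := by
      rw [hb]; exact Submodule.mem_span_singleton_self b
    simpa using (Ideal.mem_torsionOf_iff a b).1 this
  obtain ⟨c, hc⟩ := (IsPrincipalIdealRing.principal (Ideal.torsionOf R R b)).principal
  have hcb : c * b = 0 := by
    have : c ∈ Ideal.torsionOf R R b := by
      rw [hc]; exact Submodule.mem_span_singleton_self c
    simpa using (Ideal.mem_torsionOf_iff b c).1 this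
  have hac : a ∈ Submodule.span R ({c} : Set R) := by
    rw [← hc, Ideal.mem_torsionOf_iff, smul_eq_mul, mul_comm]
    exact hba
  obtain ⟨r, hr⟩ := Submodule.mem_span_singleton.1 hac
  rw [smul_eq_mul] at hr
  have hxc : x ∈ Submodule.span R ({c} : Set R) := by
    rw [← hc, Ideal.mem_torsionOf_iff, smul_eq_mul]
    exact hx b hba
  -- the two torsion ideals agree
  have htor : Ideal.torsionOf R R c = Ideal.torsionOf R R a := by
    ext y
    simp only [Ideal.mem_torsionOf_iff, smul_eq_mul]
    constructor
    · intro hyc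
      rw [← hr]
      calc y * (r * c) = r * (y * c) := by ring
        _ = 0 := by rw [hyc, mul_zero]
    · intro hya
      have hyb : y ∈ Submodule.span R ({b} : Set R) := by
        rw [← hb, Ideal.mem_torsionOf_iff, smul_eq_mul]; exact hya
      obtain ⟨s, hs⟩ := Submodule.mem_span_singleton.1 hyb
      rw [smul_eq_mul] at hs
      rw [← hs]
      calc s * b * c = s * (c * b) := by ring
        _ = 0 := by rw [hcb, mul_zero]
  -- `span {a} = span {c}` via the artinian injective-endomorphism trick
  have hle : (Submodule.span R {a} : Submodule R R) ≤ Submodule.span R {c} := by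
    rw [Submodule.span_singleton_le_iff_mem]; exact hac
  let eqv : (R ∙ c) ≃ₗ[R] (R ∙ a) :=
    (Ideal.quotTorsionOfEquivSpanSingleton R R c).symm ≪≫ₗ
      (Submodule.quotEquivOfEq _ _ htor) ≪≫ₗ
      (Ideal.quotTorsionOfEquivSpanSingleton R R a)
  let f : (R ∙ c) →ₗ[R] (R ∙ c) := (Submodule.inclusion hle) ∘ₗ eqv.toLinearMap
  have hfinj : Function.Injective f := by
    intro u v huv
    apply eqv.injective
    apply Subtype.val_injective
    have h2 : ((f u : R ∙ c) : R) = ((f v : R ∙ c) : R) := congrArg Subtype.val huv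
    simpa [f] using h2
  have hfsurj := IsArtinian.surjective_of_injective_endomorphism f hfinj
  obtain ⟨w, hw⟩ := hfsurj ⟨x, hxc⟩
  have hx2 : x = ((eqv w : R ∙ a) : R) := by
    have := congrArg Subtype.val hw
    simpa [f] using this.symm
  rw [hx2]
  exact (eqv w).2

/-- An artinian principal ideal ring is self-injective (Baer's criterion). -/
lemma AuxOrth.baer_self : Module.Baer R R := by
  intro I g
  obtain ⟨a, rfl⟩ := (IsPrincipalIdealRing.principal I).principal
  set s := g ⟨a, Submodule.mem_span_singleton_self a⟩ with hs
  have key : ∀ y, y * a = 0 → s * y = 0 := by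
    intro y hy
    have h1 : y • (⟨a, Submodule.mem_span_singleton_self a⟩ :
        Submodule.span R ({a} : Set R)) = 0 := by
      ext; simpa using hy
    have h2 : y • s = 0 := by rw [hs, ← map_smul, h1, map_zero]
    simpa [mul_comm] using h2
  obtain ⟨r, hr⟩ := Submodule.mem_span_singleton.1 (AuxOrth.annann_mem a s key)
  rw [smul_eq_mul] at hr
  refine ⟨LinearMap.toSpanSingleton R R r, ?_⟩
  intro x hmem
  obtain ⟨t, ht⟩ := Submodule.mem_span_singleton.1 hmem
  rw [smul_eq_mul] at ht
  have hx : (⟨x, hmem⟩ : Submodule.span R ({a} : Set R)) =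
      t • ⟨a, Submodule.mem_span_singleton_self a⟩ := by
    ext; simpa using ht.symm
  rw [hx, map_smul, ← hs]
  show x • r = t • s
  rw [← ht, ← hr]
  simp only [smul_eq_mul]; ring

/-- A module isomorphic to an artinian principal ideal ring is injective. -/
lemma AuxOrth.baer_of_equiv {N : Type*} [AddCommGroup N] [Module R N] (e : N ≃ₗ[R] R) :
    Module.Baer R N := by
  intro I g
  obtain ⟨g', hg'⟩ := AuxOrth.baer_self I (e.toLinearMap ∘ₗ g)
  refine ⟨e.symm.toLinearMap ∘ₗ g', fun x mem => ?_⟩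
  have := hg' x mem
  simp only [LinearMap.coe_comp, Function.comp_apply, LinearEquiv.coe_coe] at this ⊢
  rw [this, LinearEquiv.symm_apply_apply]

end Aux

/-- The orthogonal complement of a submodule with respect to a bilinear form. -/
def orth {R M N : Type*} [CommRing R] [AddCommGroup M] [Module R M]
    [AddCommGroup N] [Module R N] (B : M →ₗ[R] M →ₗ[R] N) (L : Submodule R M) :
    Submodule R M where
  carrier := {x | ∀ l ∈ L, B x l = 0}
  add_mem' := by
    intro a b ha hb l hl
    simp [ha l hl, hb l hl]
  zero_mem' := by intro l hl; simp
  smul_mem' := by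
    intro c a ha l hl
    simp [ha l hl]

section OrthAux

variable {R M N : Type*} [CommRing R] [AddCommGroup M] [Module R M]
    [AddCommGroup N] [Module R N]

lemma AuxOrth.mem_orth {B : M →ₗ[R] M →ₗ[R] N} {L : Submodule R M} {x : M} :
    x ∈ orth B L ↔ ∀ l ∈ L, B x l = 0 := Iff.rfl

lemma AuxOrth.orth_sup (B : M →ₗ[R] M →ₗ[R] N) (L L' : Submodule R M) :
    orth B (L ⊔ L') = orth B L ⊓ orth B L' := by
  ext x
  simp only [AuxOrth.mem_orth, Submodule.mem_inf]
  constructor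
  · exact fun h => ⟨fun l hl => h l (Submodule.mem_sup_left hl),
      fun l hl => h l (Submodule.mem_sup_right hl)⟩
  · rintro ⟨h1, h2⟩ l hl
    obtain ⟨u, hu, v, hv, rfl⟩ := Submodule.mem_sup.1 hl
    rw [map_add, h1 u hu, h2 v hv, add_zero]

lemma AuxOrth.orth_orth [IsArtinianRing R] [IsPrincipalIdealRing R]
    (e : N ≃ₗ[R] R) (B : M →ₗ[R] M →ₗ[R] N) (hB : ∀ x y, B x y = B y x)
    (hBnd : Function.Bijective B) (L : Submodule R M) :
    orth B (orth B L) = L := by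
  apply le_antisymm
  · intro x hx
    by_contra hxL
    set xb : M ⧸ L := Submodule.Quotient.mk x with hxbdef
    have hxb : xb ≠ 0 := fun h => hxL ((Submodule.Quotient.mk_eq_zero L).1 h)
    obtain ⟨d, hd⟩ := (IsPrincipalIdealRing.principal (Ideal.torsionOf R (M ⧸ L) xb)).principal
    -- find `r ≠ 0` with `d * r = 0`
    have hr : ∃ r : R, r ≠ 0 ∧ d * r = 0 := by
      by_contra h
      push_neg at h
      have hinj : Function.Injective (LinearMap.toSpanSingleton R R d) := by
        intro u v huv
        by_contra hne
        have h2 : (u - v) • d = 0 := by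
          have huv' : (u : R) • d = v • d := huv
          rw [sub_smul, huv', sub_self]
        exact h (u - v) (sub_ne_zero.2 hne) (by rw [mul_comm]; simpa [smul_eq_mul] using h2)
      obtain ⟨u, hu⟩ := IsArtinian.surjective_of_injective_endomorphism _ hinj 1
      simp only [LinearMap.toSpanSingleton_apply, smul_eq_mul] at hu
      have h1 : (1 : R) ∈ Ideal.torsionOf R (M ⧸ L) xb := by
        rw [hd]
        exact Submodule.mem_span_singleton.2 ⟨u, by rw [smul_eq_mul, hu]⟩
      rw [Ideal.mem_torsionOf_iff, one_smul] at h1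
      exact hxb h1
    obtain ⟨r, hr0, hdr⟩ := hr
    set n : N := e.symm r with hn
    have hn0 : n ≠ 0 := fun h => hr0 (by
      have := congrArg e h
      rwa [LinearEquiv.apply_symm_apply, map_zero] at this)
    have hker : Ideal.torsionOf R (M ⧸ L) xb ≤
        LinearMap.ker (LinearMap.toSpanSingleton R N n) := by
      rw [hd, Submodule.span_singleton_le_iff_mem, LinearMap.mem_ker,
        LinearMap.toSpanSingleton_apply]
      apply e.injective
      rw [map_smul, hn, LinearEquiv.apply_symm_apply, map_zero, smul_eq_mul, hdr]
    set ψ₀ : (R ∙ xb) →ₗ[R] N :=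
      (Submodule.liftQ _ _ hker) ∘ₗ
        (Ideal.quotTorsionOfEquivSpanSingleton R (M ⧸ L) xb).symm.toLinearMap with hψ₀
    obtain ⟨ψ, hψ⟩ := (AuxOrth.baer_of_equiv e).extension_property
      (Submodule.subtype (R ∙ xb)) (Submodule.injective_subtype _) ψ₀
    obtain ⟨y, hy⟩ := hBnd.2 (ψ ∘ₗ L.mkQ)
    have hyL : y ∈ orth B L := by
      intro l hl
      have h1 : B y l = ψ (L.mkQ l) := by rw [hy]; rfl
      rw [h1, Submodule.mkQ_apply, (Submodule.Quotient.mk_eq_zero L).2 hl, map_zero]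
    have h1 : B x y = 0 := hx y hyL
    have h2 : B y x = ψ xb := by rw [hy]; rfl
    have h3 : ψ xb = n := by
      have h4 := LinearMap.congr_fun hψ ⟨xb, Submodule.mem_span_singleton_self xb⟩
      simp only [LinearMap.coe_comp, Function.comp_apply, Submodule.subtype_apply] at h4
      have h5 : (⟨xb, Submodule.mem_span_singleton_self xb⟩ : R ∙ xb) =
          (Ideal.quotTorsionOfEquivSpanSingleton R (M ⧸ L) xb)
            (Submodule.Quotient.mk 1) := by
        rw [Ideal.quotTorsionOfEquivSpanSingleton_apply_mk]
        ext; simp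
      rw [h4, hψ₀]
      simp only [LinearMap.coe_comp, Function.comp_apply, LinearEquiv.coe_coe]
      rw [h5, LinearEquiv.symm_apply_apply, Submodule.liftQ_apply,
        LinearMap.toSpanSingleton_apply, one_smul]
    rw [hB x y, h2, h3] at h1
    exact hn0 h1
  · intro l hl y hy
    rw [hB]
    exact hy l hl

end OrthAux

/-- Let `R` be a commutative artinian principal ideal ring, `M` a finitely generated
`R`-module, `N ≅ R`, and `⟨,⟩ : M × M → N` a non-degenerate symmetric bilinear form.  Then
for all submodules `M', M'' ⊆ M` one has `(M' + M'')^⊥ = M'^⊥ ∩ M''^⊥` and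
`(M' ∩ M'')^⊥ = M'^⊥ + M''^⊥`. -/
theorem orth_sup_and_orth_inf (R M N : Type*) [CommRing R] [IsArtinianRing R]
    [IsPrincipalIdealRing R] [AddCommGroup M] [Module R M] [Module.Finite R M]
    [AddCommGroup N] [Module R N] (e : N ≃ₗ[R] R)
    (B : M →ₗ[R] M →ₗ[R] N) (hB : ∀ x y, B x y = B y x)
    (hBnd : Function.Bijective B) (M' M'' : Submodule R M) :
    orth B (M' ⊔ M'') = orth B M' ⊓ orth B M'' ∧
      orth B (M' ⊓ M'') = orth B M' ⊔ orth B M'' := by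
  have hbid : ∀ L : Submodule R M, orth B (orth B L) = L :=
    AuxOrth.orth_orth e B hB hBnd
  refine ⟨AuxOrth.orth_sup B M' M'', ?_⟩
  conv_lhs => rw [← hbid M', ← hbid M'', ← AuxOrth.orth_sup B (orth B M') (orth B M'')]
  exact hbid _
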